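/- Let λ > 0, σ > 0, d > 0, and N_y, N_z ∈ ℕ. Consider a rectangular array with antennas q_{(n_y,n_z)} = (0, (λ/2)·n_y, (λ/2)·n_z) ∈ ℝ³ for n_y ∈ {0,…,N_y−1}, n_z ∈ {0,…,N_z−1}, reference point q₀ = 0, and source parametrized as p(x,θ,φ) = x·(cos φ sin θ, sin φ sin θ, cos θ); define Δd_{n}(x,θ,φ) = ‖p(x,θ,φ) − q_n‖ − x and write ñ² = n_y² + n_z². Then, with all partial derivatives evaluated at (x,θ,φ) = (d, π/2, 0): (i) (4π²/(λ²σ²))·Σ_{n_y,n_z} (∂Δd_n/∂x)² = (4π²/(λ²σ²))·Σ_{n_y,n_z} [8d² + λ²ñ² − 4d·√(4d² + λ²ñ²)]/(4d² + λ²ñ²); (ii) (4π²/(λ²σ²))·Σ_{n_y,n_z} (∂Δd_n/∂θ)² = (4π²/σ²)·Σ_{n_y,n_z} n_z²·d²/(ñ²λ² + 4d²); (iii) (4π²/(λ²σ²))·Σ_{n_y,n_z} (∂Δd_n/∂φ)² = (4π²/σ²)·Σ_{n_y,n_z} n_y²·d²/(ñ²λ² + 4d²). -/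

import Mathlib

/-!
Along a curve `ξ ↦ p ξ` avoiding `q`, the derivative of `‖p ξ - q‖` is `⟪p - q, ∂p/∂ξ⟫ / ‖p - q‖`.
At the broadside source `p = (d, 0, 0)` and antenna `q = (0, a, b)` we have `p - q = (d, -a, -b)`,
while `∂p/∂x = (1, 0, 0)`, `∂p/∂θ = (0, 0, -d)` and `∂p/∂φ = (0, d, 0)`. So the three partial
derivatives of `Δd` are `d/ρ - 1`, `b d/ρ` and `-a d/ρ` with `ρ = √(d² + a² + b²)`, and squaring
them with `a = λ n_y / 2`, `b = λ n_z / 2`, i.e. `4ρ² = 4d² + λ² ñ²`, gives the closed forms.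
-/

open Real

/-- The unit direction vector in ℝ³ with elevation `θ` and azimuth `φ`. -/
noncomputable def u (θ φ : ℝ) : EuclideanSpace ℝ (Fin 3) :=
  (WithLp.equiv 2 (Fin 3 → ℝ)).symm
    ![Real.cos φ * Real.sin θ, Real.sin φ * Real.sin θ, Real.cos θ]

/-- The point of ℝ³ (with the Euclidean norm) with coordinates `x`, `y`, `z`. -/
noncomputable def vec3 (x y z : ℝ) : EuclideanSpace ℝ (Fin 3) :=
  (WithLp.equiv 2 (Fin 3 → ℝ)).symm ![x, y, z]

open scoped RealInnerProductSpace

theorem HasDerivAt.norm {F : Type*} [NormedAddCommGroup F] [InnerProductSpace ℝ F]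
    {f : ℝ → F} {f' : F} {t : ℝ} (hf : HasDerivAt f f' t) (h0 : f t ≠ 0) :
    HasDerivAt (‖f ·‖) (⟪f t, f'⟫ / ‖f t‖) t := by
  have hsq := hf.norm_sq.sqrt (by positivity)
  simp only [sqrt_sq (norm_nonneg _)] at hsq
  convert hsq using 1
  field_simp

namespace vec3

@[simp] lemma apply_zero (x y z : ℝ) : vec3 x y z 0 = x := rfl
@[simp] lemma apply_one (x y z : ℝ) : vec3 x y z 1 = y := rfl
@[simp] lemma apply_two (x y z : ℝ) : vec3 x y z 2 = z := rfl

lemma norm_eq (x y z : ℝ) : ‖vec3 x y z‖ = √(x ^ 2 + y ^ 2 + z ^ 2) := by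
  simp [EuclideanSpace.norm_eq, Fin.sum_univ_three, sq_abs, add_assoc]

lemma inner_eq (a b c x y z : ℝ) : ⟪vec3 a b c, vec3 x y z⟫ = a * x + b * y + c * z := by
  simp [PiLp.inner_apply, Fin.sum_univ_three]
  ring

lemma sub_eq (a b c x y z : ℝ) : vec3 a b c - vec3 x y z = vec3 (a - x) (b - y) (c - z) := by
  ext i; fin_cases i <;> simp

lemma smul_eq (r x y z : ℝ) : r • vec3 x y z = vec3 (r * x) (r * y) (r * z) := by
  ext i; fin_cases i <;> simp

lemma hasDerivAt {f g h : ℝ → ℝ} {f' g' h' t : ℝ} (hf : HasDerivAt f f' t) (hg : HasDerivAt g g' t)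
    (hh : HasDerivAt h h' t) : HasDerivAt (fun s => vec3 (f s) (g s) (h s)) (vec3 f' g' h') t := by
  have : HasDerivAt (fun s => ![f s, g s, h s]) ![f', g', h'] t := by
    refine hasDerivAt_pi.2 fun i => ?_
    fin_cases i <;> simpa
  exact (EuclideanSpace.equiv (Fin 3) ℝ).symm.hasFDerivAt.comp_hasDerivAt t this

end vec3

lemma u_eq (θ φ : ℝ) : u θ φ = vec3 (cos φ * sin θ) (sin φ * sin θ) (cos θ) := rfl

lemma hasDerivAt_u_elevation (θ φ : ℝ) :
    HasDerivAt (fun t => u t φ) (vec3 (cos φ * cos θ) (sin φ * cos θ) (-sin θ)) θ :=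
  vec3.hasDerivAt ((hasDerivAt_sin θ).const_mul _) ((hasDerivAt_sin θ).const_mul _)
    (hasDerivAt_cos θ)

lemma hasDerivAt_u_azimuth (θ φ : ℝ) :
    HasDerivAt (fun s => u θ s) (vec3 (-sin φ * sin θ) (cos φ * sin θ) 0) φ :=
  vec3.hasDerivAt ((hasDerivAt_cos φ).mul_const _) ((hasDerivAt_sin φ).mul_const _)
    (hasDerivAt_const _ _)

lemma smul_u_broadside_sub_vec3 (r a b : ℝ) : r • u (π / 2) 0 - vec3 0 a b = vec3 r (-a) (-b) := by
  simp [u_eq, vec3.smul_eq, vec3.sub_eq]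

lemma hasDerivAt_norm_of_eq_vec3 {γ : ℝ → EuclideanSpace ℝ (Fin 3)} {v : EuclideanSpace ℝ (Fin 3)}
    {t x y z : ℝ} (hγ : HasDerivAt γ v t) (ht : γ t = vec3 x y z) (hx : x ≠ 0) :
    HasDerivAt (‖γ ·‖) (⟪vec3 x y z, v⟫ / √(x ^ 2 + y ^ 2 + z ^ 2)) t := by
  have hne : γ t ≠ 0 := fun h => hx (by simpa using congrArg (· 0) (ht.symm.trans h))
  simpa [ht, vec3.norm_eq] using hγ.norm hne

section Broadside

variable {d : ℝ} (a b : ℝ)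

lemma hasDerivAt_pathDiff_range (hd : d ≠ 0) :
    HasDerivAt (fun x => ‖x • u (π / 2) 0 - vec3 0 a b‖ - x)
      (d / √(d ^ 2 + a ^ 2 + b ^ 2) - 1) d := by
  have hγ : HasDerivAt (fun x => x • u (π / 2) 0 - vec3 0 a b) (vec3 1 0 0) d := by
    simpa [u_eq] using ((hasDerivAt_id d).smul_const (u (π / 2) 0)).sub_const (vec3 0 a b)
  refine HasDerivAt.sub ?_ (hasDerivAt_id' d)
  simpa [vec3.inner_eq] using hasDerivAt_norm_of_eq_vec3 hγ (smul_u_broadside_sub_vec3 d a b) hd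

lemma hasDerivAt_pathDiff_elevation (hd : d ≠ 0) :
    HasDerivAt (fun t => ‖d • u t 0 - vec3 0 a b‖ - d)
      (b * d / √(d ^ 2 + a ^ 2 + b ^ 2)) (π / 2) := by
  have hγ : HasDerivAt (fun t => d • u t 0 - vec3 0 a b) (vec3 0 0 (-d)) (π / 2) := by
    simpa [vec3.smul_eq] using
      ((hasDerivAt_u_elevation (π / 2) 0).const_smul d).sub_const (vec3 0 a b)
  simpa [vec3.inner_eq] using
    (hasDerivAt_norm_of_eq_vec3 hγ (smul_u_broadside_sub_vec3 d a b) hd).sub_const d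

lemma hasDerivAt_pathDiff_azimuth (hd : d ≠ 0) :
    HasDerivAt (fun s => ‖d • u (π / 2) s - vec3 0 a b‖ - d)
      (-(a * d) / √(d ^ 2 + a ^ 2 + b ^ 2)) 0 := by
  have hγ : HasDerivAt (fun s => d • u (π / 2) s - vec3 0 a b) (vec3 0 d 0) 0 := by
    simpa [vec3.smul_eq] using
      ((hasDerivAt_u_azimuth (π / 2) 0).const_smul d).sub_const (vec3 0 a b)
  simpa [vec3.inner_eq] using
    (hasDerivAt_norm_of_eq_vec3 hγ (smul_u_broadside_sub_vec3 d a b) hd).sub_const d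

end Broadside

section ArrayTerms

variable {lam d : ℝ} (m n : ℝ)

lemma range_term_sq (hd : d ≠ 0) :
    (d / √(d ^ 2 + (lam / 2 * m) ^ 2 + (lam / 2 * n) ^ 2) - 1) ^ 2 =
      (8 * d ^ 2 + lam ^ 2 * (m ^ 2 + n ^ 2) - 4 * d * √(4 * d ^ 2 + lam ^ 2 * (m ^ 2 + n ^ 2))) /
        (4 * d ^ 2 + lam ^ 2 * (m ^ 2 + n ^ 2)) := by
  have hS : 0 < d ^ 2 + (lam / 2 * m) ^ 2 + (lam / 2 * n) ^ 2 := by positivity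
  obtain ⟨ρ, hρ, hρS⟩ : ∃ ρ, 0 < ρ ∧ √(d ^ 2 + (lam / 2 * m) ^ 2 + (lam / 2 * n) ^ 2) = ρ :=
    ⟨_, sqrt_pos.2 hS, rfl⟩
  have hρsq : ρ ^ 2 = d ^ 2 + (lam / 2 * m) ^ 2 + (lam / 2 * n) ^ 2 := hρS ▸ sq_sqrt hS.le
  have h4 : 4 * d ^ 2 + lam ^ 2 * (m ^ 2 + n ^ 2) = (2 * ρ) ^ 2 := by rw [mul_pow, hρsq]; ring
  rw [hρS, h4, sqrt_sq (by positivity)]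
  field_simp
  linear_combination 4 * hρsq

lemma angular_term_sq (c : ℝ) (hd : d ≠ 0) :
    (lam / 2 * c * d / √(d ^ 2 + (lam / 2 * m) ^ 2 + (lam / 2 * n) ^ 2)) ^ 2 =
      lam ^ 2 * (c ^ 2 * d ^ 2 / ((m ^ 2 + n ^ 2) * lam ^ 2 + 4 * d ^ 2)) := by
  have hS : 0 < d ^ 2 + (lam / 2 * m) ^ 2 + (lam / 2 * n) ^ 2 := by positivity
  rw [div_pow, sq_sqrt hS.le]
  field_simp
  ring

end ArrayTerms

lemma div_mul_sq_mul_sum_sum {ι κ : Type*} {s : Finset ι} {t : Finset κ} {f g : ι → κ → ℝ}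
    {c lam σ : ℝ} (hlam : lam ≠ 0) (hfg : ∀ i j, f i j = lam ^ 2 * g i j) :
    c / (lam ^ 2 * σ ^ 2) * ∑ i ∈ s, ∑ j ∈ t, f i j = c / σ ^ 2 * ∑ i ∈ s, ∑ j ∈ t, g i j := by
  simp_rw [hfg, ← Finset.mul_sum]
  field_simp

theorem stmt_15_general (lam sig d : ℝ) (hlam : 0 < lam) (hd : 0 < d)
    (Ny Nz : ℕ) :
    (4 * π ^ 2 / (lam ^ 2 * sig ^ 2) *
        ∑ ny ∈ Finset.range Ny, ∑ nz ∈ Finset.range Nz,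
          (deriv (fun x : ℝ =>
            ‖x • u (π / 2) 0 - vec3 0 (lam / 2 * ny) (lam / 2 * nz)‖ - x) d) ^ 2 =
      4 * π ^ 2 / (lam ^ 2 * sig ^ 2) *
        ∑ ny ∈ Finset.range Ny, ∑ nz ∈ Finset.range Nz,
          (8 * d ^ 2 + lam ^ 2 * ((ny : ℝ) ^ 2 + (nz : ℝ) ^ 2) -
            4 * d * Real.sqrt (4 * d ^ 2 + lam ^ 2 * ((ny : ℝ) ^ 2 + (nz : ℝ) ^ 2))) /
            (4 * d ^ 2 + lam ^ 2 * ((ny : ℝ) ^ 2 + (nz : ℝ) ^ 2))) ∧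
    (4 * π ^ 2 / (lam ^ 2 * sig ^ 2) *
        ∑ ny ∈ Finset.range Ny, ∑ nz ∈ Finset.range Nz,
          (deriv (fun t : ℝ =>
            ‖d • u t 0 - vec3 0 (lam / 2 * ny) (lam / 2 * nz)‖ - d) (π / 2)) ^ 2 =
      4 * π ^ 2 / sig ^ 2 *
        ∑ ny ∈ Finset.range Ny, ∑ nz ∈ Finset.range Nz,
          (nz : ℝ) ^ 2 * d ^ 2 /
            (((ny : ℝ) ^ 2 + (nz : ℝ) ^ 2) * lam ^ 2 + 4 * d ^ 2)) ∧
    (4 * π ^ 2 / (lam ^ 2 * sig ^ 2) *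
        ∑ ny ∈ Finset.range Ny, ∑ nz ∈ Finset.range Nz,
          (deriv (fun s : ℝ =>
            ‖d • u (π / 2) s - vec3 0 (lam / 2 * ny) (lam / 2 * nz)‖ - d) 0) ^ 2 =
      4 * π ^ 2 / sig ^ 2 *
        ∑ ny ∈ Finset.range Ny, ∑ nz ∈ Finset.range Nz,
          (ny : ℝ) ^ 2 * d ^ 2 /
            (((ny : ℝ) ^ 2 + (nz : ℝ) ^ 2) * lam ^ 2 + 4 * d ^ 2)) := by
  refine ⟨?_, ?_, ?_⟩
  · congr 1
    refine Finset.sum_congr rfl fun ny _ => Finset.sum_congr rfl fun nz _ => ?_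
    rw [(hasDerivAt_pathDiff_range _ _ hd.ne').deriv, range_term_sq _ _ hd.ne']
  · refine div_mul_sq_mul_sum_sum hlam.ne' fun ny nz => ?_
    rw [(hasDerivAt_pathDiff_elevation _ _ hd.ne').deriv, angular_term_sq _ _ _ hd.ne']
  · refine div_mul_sq_mul_sum_sum hlam.ne' fun ny nz => ?_
    rw [(hasDerivAt_pathDiff_azimuth _ _ hd.ne').deriv, neg_div, neg_sq,
      angular_term_sq _ _ _ hd.ne']

theorem stmt_15 (lam sig d : ℝ) (hlam : 0 < lam) (hsig : 0 < sig) (hd : 0 < d)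
    (Ny Nz : ℕ) :
    (4 * π ^ 2 / (lam ^ 2 * sig ^ 2) *
        ∑ ny ∈ Finset.range Ny, ∑ nz ∈ Finset.range Nz,
          (deriv (fun x : ℝ =>
            ‖x • u (π / 2) 0 - vec3 0 (lam / 2 * ny) (lam / 2 * nz)‖ - x) d) ^ 2 =
      4 * π ^ 2 / (lam ^ 2 * sig ^ 2) *
        ∑ ny ∈ Finset.range Ny, ∑ nz ∈ Finset.range Nz,
          (8 * d ^ 2 + lam ^ 2 * ((ny : ℝ) ^ 2 + (nz : ℝ) ^ 2) -
            4 * d * Real.sqrt (4 * d ^ 2 + lam ^ 2 * ((ny : ℝ) ^ 2 + (nz : ℝ) ^ 2))) /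
            (4 * d ^ 2 + lam ^ 2 * ((ny : ℝ) ^ 2 + (nz : ℝ) ^ 2))) ∧
    (4 * π ^ 2 / (lam ^ 2 * sig ^ 2) *
        ∑ ny ∈ Finset.range Ny, ∑ nz ∈ Finset.range Nz,
          (deriv (fun t : ℝ =>
            ‖d • u t 0 - vec3 0 (lam / 2 * ny) (lam / 2 * nz)‖ - d) (π / 2)) ^ 2 =
      4 * π ^ 2 / sig ^ 2 *
        ∑ ny ∈ Finset.range Ny, ∑ nz ∈ Finset.range Nz,
          (nz : ℝ) ^ 2 * d ^ 2 /
            (((ny : ℝ) ^ 2 + (nz : ℝ) ^ 2) * lam ^ 2 + 4 * d ^ 2)) ∧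
    (4 * π ^ 2 / (lam ^ 2 * sig ^ 2) *
        ∑ ny ∈ Finset.range Ny, ∑ nz ∈ Finset.range Nz,
          (deriv (fun s : ℝ =>
            ‖d • u (π / 2) s - vec3 0 (lam / 2 * ny) (lam / 2 * nz)‖ - d) 0) ^ 2 =
      4 * π ^ 2 / sig ^ 2 *
        ∑ ny ∈ Finset.range Ny, ∑ nz ∈ Finset.range Nz,
          (ny : ℝ) ^ 2 * d ^ 2 /
            (((ny : ℝ) ^ 2 + (nz : ℝ) ^ 2) * lam ^ 2 + 4 * d ^ 2)) :=
  stmt_15_general lam sig d hlam hd Ny Nz
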